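/- Let u : ℝ × ℝ → ℝ be differentiable and suppose it satisfies the age-structured population equation ∂u/∂t(a,t) + ∂u/∂a(a,t) = -μ(a,t)·u(a,t) + λ(a,t) at every point, where μ, λ : ℝ × ℝ → ℝ satisfy μ(a,t) ≥ 0 and λ(a,t) ≥ 0 for all (a,t). If the initial datum satisfies u(a,0) ≥ 0 for all a ≥ 0, then u(a,t) ≥ 0 for all t ≥ 0 and all a ≥ t. -/

import Mathlib

/-!
Along each characteristic `s ↦ (c + s, s)` with `c ≥ 0` the equation becomes the linear ODE
`v' = -μ v + λ` with `v(0) = u(c, 0) ≥ 0`. Where `v < 0` the right-hand side is nonnegative, so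
`v` cannot cross below zero; the point `(a, t)` lies on the characteristic with `c = a - t`.
-/

open Set

/-- The barrier is `-v ≤ ε (1 + (x - a))`: its strict slope `ε` beats `-v'` wherever the two
meet, since there `v < 0`. -/
theorem nonneg_of_deriv_nonneg_of_neg {v v' : ℝ → ℝ} {a b : ℝ} (hv : ContinuousOn v (Icc a b))
    (hv' : ∀ x ∈ Ico a b, HasDerivWithinAt v (v' x) (Ici x) x) (ha : 0 ≤ v a)
    (hneg : ∀ x ∈ Ico a b, v x < 0 → 0 ≤ v' x) : ∀ ⦃x⦄, x ∈ Icc a b → 0 ≤ v x := by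
  intro x hx
  have hx₀ : 0 < 1 + (x - a) := by linarith [hx.1]
  have barrier : ∀ ε > 0, -v x ≤ ε * (1 + (x - a)) := fun ε hε =>
    image_le_of_deriv_right_lt_deriv_boundary' hv.neg (fun y hy => (hv' y hy).neg)
      (B := fun y => ε * (1 + (y - a))) (B' := fun _ => ε) (by simp; linarith) (by fun_prop)
      (fun y _ => by simpa using ((hasDerivAt_id y).sub_const a).const_add 1 |>.const_mul ε
        |>.hasDerivWithinAt)
      (fun y hy hmeet => by
        have : v y < 0 := by
          simp only [Pi.neg_apply] at hmeet
          nlinarith [hy.1]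
        linarith [hneg y hy this]) hx
  refine neg_nonpos.mp (le_of_forall_pos_le_add fun ε hε => ?_)
  simpa [div_mul_cancel₀ _ hx₀.ne'] using barrier (ε / (1 + (x - a))) (by positivity)

section PartialDerivatives

variable {E : Type*} [NormedAddCommGroup E] [NormedSpace ℝ E] {u : ℝ × ℝ → E} {x y : ℝ}

theorem DifferentiableAt.deriv_fst_eq_fderiv (hu : DifferentiableAt ℝ u (x, y)) :
    deriv (fun b => u (b, y)) x = fderiv ℝ u (x, y) (1, 0) :=
  (hu.hasFDerivAt.comp_hasDerivAt x ((hasDerivAt_id x).prodMk (hasDerivAt_const x y))).deriv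

theorem DifferentiableAt.deriv_snd_eq_fderiv (hu : DifferentiableAt ℝ u (x, y)) :
    deriv (fun r => u (x, r)) y = fderiv ℝ u (x, y) (0, 1) :=
  (hu.hasFDerivAt.comp_hasDerivAt y ((hasDerivAt_const y x).prodMk (hasDerivAt_id y))).deriv

theorem DifferentiableAt.hasDerivAt_comp_diagonal {s : ℝ}
    (hu : DifferentiableAt ℝ u (x + s, y + s)) :
    HasDerivAt (fun r => u (x + r, y + r))
      (deriv (fun b => u (b, y + s)) (x + s) + deriv (fun r => u (x + s, r)) (y + s)) s := by
  have hline : HasDerivAt (fun r : ℝ => (x + r, y + r)) ((1 : ℝ), (1 : ℝ)) s :=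
    ((hasDerivAt_id s).const_add x).prodMk ((hasDerivAt_id s).const_add y)
  have hsplit : ((1 : ℝ), (1 : ℝ)) = ((1 : ℝ), (0 : ℝ)) + ((0 : ℝ), (1 : ℝ)) := by simp
  rw [hu.deriv_fst_eq_fderiv, hu.deriv_snd_eq_fderiv, ← map_add, ← hsplit]
  exact hu.hasFDerivAt.comp_hasDerivAt s hline

end PartialDerivatives

/-- If `u : ℝ × ℝ → ℝ` is differentiable and satisfies the
age-structured population equation
`∂u/∂t (a,t) + ∂u/∂a (a,t) = -μ(a,t) * u(a,t) + λ(a,t)` at every point,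
with `μ, λ ≥ 0` everywhere, and `u(a,0) ≥ 0` for all `a ≥ 0`, then
`u(a,t) ≥ 0` for all `t ≥ 0` and all `a ≥ t`. -/
theorem age_structured_positivity
    (u μ lam : ℝ × ℝ → ℝ)
    (hu : Differentiable ℝ u)
    (hpde : ∀ a t : ℝ,
      deriv (fun s => u (a, s)) t + deriv (fun b => u (b, t)) a
        = -μ (a, t) * u (a, t) + lam (a, t))
    (hμ : ∀ a t : ℝ, 0 ≤ μ (a, t))
    (hlam : ∀ a t : ℝ, 0 ≤ lam (a, t))
    (hu0 : ∀ a : ℝ, 0 ≤ a → 0 ≤ u (a, 0)) :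
    ∀ t : ℝ, 0 ≤ t → ∀ a : ℝ, t ≤ a → 0 ≤ u (a, t) := by
  intro t ht a hat
  set v : ℝ → ℝ := fun s => u (a - t + s, s)
  have hv : ∀ s, HasDerivAt v (-μ (a - t + s, s) * v s + lam (a - t + s, s)) s := fun s => by
    have h := (hu _).hasDerivAt_comp_diagonal (x := a - t) (y := 0) (s := s)
    simp only [zero_add] at h
    rwa [add_comm, hpde] at h
  have hv_nonneg : ∀ s ∈ Icc 0 t, 0 ≤ v s :=
    nonneg_of_deriv_nonneg_of_neg (fun s _ => (hv s).continuousAt.continuousWithinAt)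
      (fun s _ => (hv s).hasDerivWithinAt) (by simpa [v] using hu0 (a - t) (by linarith))
      (fun s _ hs => by nlinarith [hμ (a - t + s) s, hlam (a - t + s) s])
  simpa [v] using hv_nonneg t ⟨ht, le_rfl⟩
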